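/- Let α > 0 and β > 0. For R > 0 let κ_0(R) be the unique positive solution of (α + β) R I_0(κR) K_0(κR) = 1, write P(x) = I_0(x) K_0(x), and define ς(R) = α (1 − β R) P(R κ_0(R)) + α κ_0(R) R P'(R κ_0(R)). Then there exists R₁ > 0 such that ς(R) < 0 for all R > R₁ (hence the first-order correction t_0 is positive for all sufficiently large R). -/

import Mathlib

/-!
On the dispersion relation `P(Rκ₀) = 1 / ((α + β) R) > 0`, so the term `α (1 − βR) P(Rκ₀)` is
negative as soon as `R > 1 / β`. The term `α κ₀ R P'(Rκ₀)` is never positive: `P' = I₁K₀ − I₀K₁`,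
and the integral representations give `I₁ ≤ I₀` (from `cos θ ≤ 1`) and `K₀ ≤ K₁`
(from `cosh t ≥ 1`).
-/

open MeasureTheory Real Filter Asymptotics Topology

/-- Modified Bessel function of the first kind of integer order `m`. -/
noncomputable def besselI (m : ℤ) (x : ℝ) : ℝ :=
  (1 / Real.pi) * ∫ θ in (0:ℝ)..Real.pi, Real.exp (x * Real.cos θ) * Real.cos ((m : ℝ) * θ)

/-- Modified Bessel function of the second kind of integer order `m`. -/
noncomputable def besselK (m : ℤ) (x : ℝ) : ℝ :=
  ∫ t in Set.Ioi (0:ℝ), Real.exp (-x * Real.cosh t) * Real.cosh ((m : ℝ) * t)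

/-- `ξ_{m,α,d}(κ) = α R_d I_m(κ R_d) K_m(κ R_d) − 1` with `R_d = R + d`. -/
noncomputable def xiA (m : ℤ) (α R d κ : ℝ) : ℝ :=
  α * (R + d) * (besselI m (κ * (R + d)) * besselK m (κ * (R + d))) - 1

/-- `ξ_{m,β}(κ) = β R I_m(κ R) K_m(κ R) − 1`. -/
noncomputable def xiB (m : ℤ) (β R κ : ℝ) : ℝ :=
  β * R * (besselI m (κ * R) * besselK m (κ * R)) - 1

/-- `ν_m(κ, d) = α β R_d R K_m(κ R_d)² I_m(κ R)²` with `R_d = R + d`. -/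
noncomputable def nu (m : ℤ) (α β R κ d : ℝ) : ℝ :=
  α * β * (R + d) * R * (besselK m (κ * (R + d)))^2 * (besselI m (κ * R))^2

/-- `η_m(κ, d) = ν_m(κ, d) − ξ_{m,α,d}(κ) ξ_{m,β}(κ)`. -/
noncomputable def eta (m : ℤ) (α β R κ d : ℝ) : ℝ :=
  nu m α β R κ d - xiA m α R d κ * xiB m β R κ

lemma besselI_zero_eq_integral (x : ℝ) :
    besselI 0 x = 1 / π * ∫ θ in (0:ℝ)..π, exp (x * cos θ) := by
  simp [besselI]

lemma besselI_one_eq_integral (x : ℝ) :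
    besselI 1 x = 1 / π * ∫ θ in (0:ℝ)..π, exp (x * cos θ) * cos θ := by
  simp [besselI]

lemma besselK_zero_eq_integral (x : ℝ) :
    besselK 0 x = ∫ t in Set.Ioi (0:ℝ), exp (-x * cosh t) := by
  simp [besselK]

lemma besselK_one_eq_integral (x : ℝ) :
    besselK 1 x = ∫ t in Set.Ioi (0:ℝ), exp (-x * cosh t) * cosh t := by
  simp [besselK]

lemma self_le_cosh_of_nonneg {t : ℝ} (ht : 0 ≤ t) : t ≤ cosh t :=
  (self_le_sinh_iff.2 ht).trans (sinh_lt_cosh t).le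

lemma exp_neg_mul_cosh_mul_cosh_le {c t : ℝ} (hc : 0 < c) (ht : 0 ≤ t) :
    exp (-c * cosh t) * cosh t ≤ 2 / c * exp (-1) * exp (-(c / 2) * t) := by
  have hsplit : exp (-c * cosh t) = exp (-(c / 2 * cosh t)) * exp (-(c / 2 * cosh t)) := by
    rw [← exp_add]; ring_nf
  have hpeak := mul_exp_neg_le_exp_neg_one (c / 2 * cosh t)
  have hdecay : exp (-(c / 2 * cosh t)) ≤ exp (-(c / 2) * t) := by
    rw [neg_mul]; gcongr; exact self_le_cosh_of_nonneg ht
  calc exp (-c * cosh t) * cosh t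
      = 2 / c * (c / 2 * cosh t * exp (-(c / 2 * cosh t))) * exp (-(c / 2 * cosh t)) := by
        rw [hsplit]; field_simp
    _ ≤ 2 / c * exp (-1) * exp (-(c / 2) * t) := by gcongr

lemma integrableOn_exp_neg_mul_cosh_mul_cosh {c : ℝ} (hc : 0 < c) :
    IntegrableOn (fun t => exp (-c * cosh t) * cosh t) (Set.Ioi 0) := by
  have hdom := (exp_neg_integrableOn_Ioi 0 (half_pos hc)).const_mul (2 / c * exp (-1))
  refine hdom.mono' (by fun_prop) ?_
  filter_upwards [ae_restrict_mem measurableSet_Ioi] with t ht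
  rw [norm_of_nonneg (by positivity)]
  exact exp_neg_mul_cosh_mul_cosh_le hc (le_of_lt ht)

lemma integrableOn_exp_neg_mul_cosh {c : ℝ} (hc : 0 < c) :
    IntegrableOn (fun t => exp (-c * cosh t)) (Set.Ioi 0) := by
  refine (integrableOn_exp_neg_mul_cosh_mul_cosh hc).mono' (by fun_prop) (.of_forall fun t => ?_)
  rw [norm_of_nonneg (exp_pos _).le]
  exact le_mul_of_one_le_right (exp_pos _).le (one_le_cosh t)

lemma hasDerivAt_besselI_zero (x : ℝ) : HasDerivAt (besselI 0) (besselI 1 x) x := by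
  have hbound : ∀ θ, ∀ y ∈ Metric.ball x 1, ‖exp (y * cos θ) * cos θ‖ ≤ exp (|x| + 1) := by
    intro θ y hy
    have hy : |y| ≤ |x| + 1 := by
      rw [Metric.mem_ball, dist_eq] at hy
      linarith [abs_sub_abs_le_abs_sub y x]
    have hexponent : y * cos θ ≤ |x| + 1 :=
      calc y * cos θ ≤ |y| * |cos θ| := (le_abs_self _).trans (abs_mul _ _).le
        _ ≤ |y| := mul_le_of_le_one_right (abs_nonneg y) (abs_cos_le_one θ)
        _ ≤ |x| + 1 := hy
    rw [norm_mul, norm_of_nonneg (exp_pos _).le, norm_eq_abs]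
    calc exp (y * cos θ) * |cos θ| ≤ exp (y * cos θ) :=
          mul_le_of_le_one_right (exp_pos _).le (abs_cos_le_one θ)
      _ ≤ exp (|x| + 1) := exp_le_exp.2 hexponent
  have hderiv := intervalIntegral.hasDerivAt_integral_of_dominated_loc_of_deriv_le
    (F := fun y θ => exp (y * cos θ)) (F' := fun y θ => exp (y * cos θ) * cos θ)
    (μ := volume) (a := 0) (b := π) (bound := fun _ => exp (|x| + 1))
    (Metric.ball_mem_nhds x one_pos)
    (.of_forall fun _ => by fun_prop) (Continuous.intervalIntegrable (by fun_prop) _ _)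
    (by fun_prop) (.of_forall fun θ _ => hbound θ) intervalIntegrable_const
    (.of_forall fun θ _ y _ => (hasDerivAt_mul_const (cos θ)).exp)
  rw [funext besselI_zero_eq_integral, besselI_one_eq_integral]
  exact hderiv.2.const_mul _

lemma hasDerivAt_besselK_zero {x : ℝ} (hx : 0 < x) :
    HasDerivAt (besselK 0) (-besselK 1 x) x := by
  have hbound : ∀ t, ∀ y ∈ Metric.ball x (x / 2),
      ‖exp (-y * cosh t) * -cosh t‖ ≤ exp (-(x / 2) * cosh t) * cosh t := by
    intro t y hy
    have hy : x / 2 ≤ y := by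
      rw [Metric.mem_ball, dist_eq] at hy
      linarith [neg_abs_le (y - x)]
    rw [norm_mul, norm_neg, norm_of_nonneg (exp_pos _).le, norm_of_nonneg (cosh_pos t).le]
    gcongr
  have hderiv := hasDerivAt_integral_of_dominated_loc_of_deriv_le
    (F := fun y t => exp (-y * cosh t)) (F' := fun y t => exp (-y * cosh t) * -cosh t)
    (μ := volume.restrict (Set.Ioi 0)) (bound := fun t => exp (-(x / 2) * cosh t) * cosh t)
    (Metric.ball_mem_nhds x (half_pos hx)) (.of_forall fun _ => by fun_prop)
    (integrableOn_exp_neg_mul_cosh hx) (by fun_prop) (.of_forall hbound)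
    (integrableOn_exp_neg_mul_cosh_mul_cosh (half_pos hx))
    (.of_forall fun t y _ => by simpa using ((hasDerivAt_id y).neg.mul_const (cosh t)).exp)
  rw [funext besselK_zero_eq_integral, besselK_one_eq_integral, ← integral_neg]
  simpa only [mul_neg] using hderiv.2

lemma besselI_zero_nonneg (x : ℝ) : 0 ≤ besselI 0 x := by
  rw [besselI_zero_eq_integral]
  exact mul_nonneg (by positivity)
    (intervalIntegral.integral_nonneg pi_pos.le fun θ _ => (exp_pos _).le)

lemma besselI_one_le_besselI_zero (x : ℝ) : besselI 1 x ≤ besselI 0 x := by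
  rw [besselI_zero_eq_integral, besselI_one_eq_integral]
  gcongr
  refine intervalIntegral.integral_mono_on pi_pos.le
    (Continuous.intervalIntegrable (by fun_prop) _ _)
    (Continuous.intervalIntegrable (by fun_prop) _ _) fun θ _ => ?_
  exact mul_le_of_le_one_right (exp_pos _).le (cos_le_one θ)

lemma besselK_zero_nonneg (x : ℝ) : 0 ≤ besselK 0 x := by
  rw [besselK_zero_eq_integral]
  exact setIntegral_nonneg measurableSet_Ioi fun t _ => (exp_pos _).le

lemma besselK_zero_le_besselK_one {x : ℝ} (hx : 0 < x) : besselK 0 x ≤ besselK 1 x := by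
  rw [besselK_zero_eq_integral, besselK_one_eq_integral]
  refine setIntegral_mono_on (integrableOn_exp_neg_mul_cosh hx)
    (integrableOn_exp_neg_mul_cosh_mul_cosh hx) measurableSet_Ioi fun t _ => ?_
  exact le_mul_of_one_le_right (exp_pos _).le (one_le_cosh t)

lemma deriv_besselI_zero_mul_besselK_zero_nonpos {x : ℝ} (hx : 0 < x) :
    deriv (fun x => besselI 0 x * besselK 0 x) x ≤ 0 := by
  have hderiv : HasDerivAt (fun x => besselI 0 x * besselK 0 x)
      (besselI 1 x * besselK 0 x + besselI 0 x * -besselK 1 x) x :=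
    (hasDerivAt_besselI_zero x).mul (hasDerivAt_besselK_zero hx)
  rw [hderiv.deriv]
  have hI := mul_le_mul_of_nonneg_right (besselI_one_le_besselI_zero x) (besselK_zero_nonneg x)
  have hK := mul_le_mul_of_nonneg_left (besselK_zero_le_besselK_one hx) (besselI_zero_nonneg x)
  linarith

/-- the quantity `ς(R)` is negative for all sufficiently large `R`. -/
theorem varsigma_neg_large_R (α β : ℝ) (hα : 0 < α) (hβ : 0 < β)
    (κ0 : ℝ → ℝ)
    (hκ0 : ∀ R > (0:ℝ), 0 < κ0 R ∧
      (α + β) * R * (besselI 0 (κ0 R * R) * besselK 0 (κ0 R * R)) = 1) :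
    ∃ R₁ > (0:ℝ), ∀ R : ℝ, R > R₁ →
      α * (1 - β * R) * (besselI 0 (R * κ0 R) * besselK 0 (R * κ0 R))
        + α * κ0 R * R * deriv (fun x => besselI 0 x * besselK 0 x) (R * κ0 R) < 0 := by
  refine ⟨1 / β, by positivity, fun R hR₁ => ?_⟩
  have hR : 0 < R := lt_trans (by positivity) hR₁
  have hβR : 1 < β * R := by rwa [gt_iff_lt, div_lt_iff₀' hβ] at hR₁
  obtain ⟨hκ, hκ_eq⟩ := hκ0 R hR
  have hP : 0 < besselI 0 (R * κ0 R) * besselK 0 (R * κ0 R) := by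
    rw [mul_comm R]
    exact pos_of_mul_pos_right (hκ_eq ▸ one_pos) (by positivity)
  have hP' := deriv_besselI_zero_mul_besselK_zero_nonpos (mul_pos hR hκ)
  have hfirst : α * (1 - β * R) * (besselI 0 (R * κ0 R) * besselK 0 (R * κ0 R)) < 0 :=
    mul_neg_of_neg_of_pos (mul_neg_of_pos_of_neg hα (by linarith)) hP
  have hsecond : α * κ0 R * R * deriv (fun x => besselI 0 x * besselK 0 x) (R * κ0 R) ≤ 0 :=
    mul_nonpos_of_nonneg_of_nonpos (by positivity) hP'
  linarith
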